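/- (Theorem 1, monotonicity part.) Fix σ1, σ2 > 0, β > 0, and τ ∈ (1/2, 1), and set c = (1/β)·log(τ/(1−τ)). Define the masked probability as a function of the class separation z = μ2 − μ1 > 0: P0(z) = 1 − (1/2)·Φ((z/2 − c)/σ2) − (1/2)·Φ((−z/2 − c)/σ1) − (1/2)·Φ((z/2 − c)/σ1) − (1/2)·Φ((−z/2 − c)/σ2), where Φ is the standard normal CDF. Then P0 is strictly decreasing on (0, ∞); i.e., P(Y_p = 0) increases as the class separation μ2 − μ1 gets smaller. -/
import Mathlib

/-- The standard normal CDF: the measure of `(-∞, x]` under `N(0,1)`. -/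
noncomputable def stdNormalCDF (x : ℝ) : ℝ :=
  ((ProbabilityTheory.gaussianReal 0 1) (Set.Iic x)).toReal

open ProbabilityTheory MeasureTheory Real Set

lemma stdNormalCDF_eq (x : ℝ) :
    stdNormalCDF x = ∫ t in Set.Iic x, gaussianPDFReal 0 1 t := by
  rw [stdNormalCDF, gaussianReal_apply_eq_integral _ one_ne_zero,
    ENNReal.toReal_ofReal]
  exact integral_nonneg fun t => gaussianPDFReal_nonneg 0 1 t

set_option maxHeartbeats 1000000 in
lemma stdNormalCDF_sub (a b : ℝ) :
    stdNormalCDF b - stdNormalCDF a = ∫ t in a..b, gaussianPDFReal 0 1 t := by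
  rw [stdNormalCDF_eq, stdNormalCDF_eq]
  rw [intervalIntegral.integral_Iic_sub_Iic ((integrable_gaussianPDFReal 0 1).integrableOn)
    ((integrable_gaussianPDFReal 0 1).integrableOn)]

lemma gaussianPDFReal_neg (t : ℝ) :
    gaussianPDFReal 0 1 (-t) = gaussianPDFReal 0 1 t := by
  simp [ProbabilityTheory.gaussianPDFReal, neg_sq]

lemma gaussianPDFReal_cont : Continuous (gaussianPDFReal 0 1) := by
  unfold ProbabilityTheory.gaussianPDFReal
  fun_prop

lemma gaussianPDFReal_lt {t d : ℝ} (hd : 0 < d) (ht : -(d/2) < t) :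
    gaussianPDFReal 0 1 (t + d) < gaussianPDFReal 0 1 t := by
  unfold ProbabilityTheory.gaussianPDFReal
  push_cast
  refine mul_lt_mul_of_pos_left ?_ ?_
  · apply Real.exp_lt_exp.mpr
    rw [div_lt_div_iff₀ (by norm_num) (by norm_num)]
    nlinarith
  · have := Real.pi_pos
    positivity

/-- key lemma for one variance -/
lemma key (σ c z₁ z₂ : ℝ) (hσ : 0 < σ) (hc : 0 < c) (hz₁ : 0 < z₁) (h12 : z₁ < z₂) :
    stdNormalCDF ((-(z₁/2) - c)/σ) - stdNormalCDF ((-(z₂/2) - c)/σ)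
      < stdNormalCDF ((z₂/2 - c)/σ) - stdNormalCDF ((z₁/2 - c)/σ) := by
  have hσ' : σ ≠ 0 := hσ.ne'
  set φ := gaussianPDFReal 0 1 with hφ
  set a := (z₁/2 - c)/σ with ha
  set b := (z₂/2 - c)/σ with hb
  set d := 2*c/σ with hd
  have hab : a < b := by
    rw [ha, hb]
    have : z₁/2 - c < z₂/2 - c := by linarith
    gcongr
  have hd0 : 0 < d := by rw [hd]; positivity
  have e1 : (-(z₂/2) - c)/σ = -(b + d) := by rw [hb, hd]; field_simp; ring
  have e2 : (-(z₁/2) - c)/σ = -(a + d) := by rw [ha, hd]; field_simp; ring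
  have lhs_eq : stdNormalCDF ((-(z₁/2) - c)/σ) - stdNormalCDF ((-(z₂/2) - c)/σ)
      = ∫ t in a..b, φ (t + d) := by
    rw [e1, e2, stdNormalCDF_sub]
    calc ∫ t in -(b+d)..-(a+d), φ t
        = ∫ t in (a+d)..(b+d), φ (-t) := (intervalIntegral.integral_comp_neg φ).symm
      _ = ∫ t in (a+d)..(b+d), φ t := by
          congr 1; ext t; exact gaussianPDFReal_neg t
      _ = ∫ t in a..b, φ (t + d) := (intervalIntegral.integral_comp_add_right φ d).symm
  have rhs_eq : stdNormalCDF ((z₂/2 - c)/σ) - stdNormalCDF ((z₁/2 - c)/σ)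
      = ∫ t in a..b, φ t := stdNormalCDF_sub a b
  rw [lhs_eq, rhs_eq]
  have hacrit : -(d/2) < a := by
    have h1 : -(d/2) = (0 - c)/σ := by rw [hd]; field_simp; ring
    rw [h1, ha]
    gcongr
    linarith
  apply intervalIntegral.integral_lt_integral_of_continuousOn_of_le_of_exists_lt hab
  · exact (gaussianPDFReal_cont.comp (continuous_id.add continuous_const)).continuousOn
  · exact gaussianPDFReal_cont.continuousOn
  · intro x hx
    exact (gaussianPDFReal_lt hd0 (lt_of_lt_of_le hacrit hx.1.le)).le
  · exact ⟨a, ⟨le_refl a, hab.le⟩, gaussianPDFReal_lt hd0 hacrit⟩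

theorem stmt_12 (σ₁ σ₂ β τ : ℝ) (hσ₁ : 0 < σ₁) (hσ₂ : 0 < σ₂) (hβ : 0 < β)
    (hτ : τ ∈ Set.Ioo (1/2 : ℝ) 1)
    (c : ℝ) (hc : c = (1/β) * Real.log (τ / (1 - τ)))
    (P0 : ℝ → ℝ)
    (hP0 : ∀ z, P0 z = 1 - 1/2 * stdNormalCDF ((z/2 - c) / σ₂)
        - 1/2 * stdNormalCDF ((-(z/2) - c) / σ₁)
        - 1/2 * stdNormalCDF ((z/2 - c) / σ₁)
        - 1/2 * stdNormalCDF ((-(z/2) - c) / σ₂)) :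
    StrictAntiOn P0 (Set.Ioi 0) := by
  obtain ⟨hτ1, hτ2⟩ := hτ
  have hc0 : 0 < c := by
    rw [hc]
    apply mul_pos (by positivity)
    apply Real.log_pos
    rw [lt_div_iff₀ (by linarith)]
    linarith
  intro z₁ hz₁ z₂ hz₂ h12
  have k1 := key σ₁ c z₁ z₂ hσ₁ hc0 hz₁ h12
  have k2 := key σ₂ c z₁ z₂ hσ₂ hc0 hz₁ h12
  rw [hP0 z₁, hP0 z₂]
  linarith
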